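/- In L_excore, every catcher f : X → Y is provably strongly equal either to a propagator, or to a ∘ untag ∘ tag ∘ u for some propagator a : P → Y and pure term u : X → P. -/
import Mathlib


/-! The decorated logic for the core language for exceptions `L_excore`.
Types are elements of `Ty`, with a distinguished type `Par` of parameters and an
empty type `Emp` (written `0` in the paper); `Sig` is a signature of pure operations.
`tag : Par → Emp` is a propagator and `untag : Emp → Par` is a catcher. -/

inductive CoTm (Ty : Type) (Par Emp : Ty) (Sig : Ty → Ty → Type) : Ty → Ty → Type where
  | id (X : Ty) : CoTm Ty Par Emp Sig X X
  | comp {X Y Z : Ty} (g : CoTm Ty Par Emp Sig Y Z) (f : CoTm Ty Par Emp Sig X Y) :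
      CoTm Ty Par Emp Sig X Z
  | gen {X Y : Ty} (s : Sig X Y) : CoTm Ty Par Emp Sig X Y
  | fromEmpty (Y : Ty) : CoTm Ty Par Emp Sig Emp Y
  | tag : CoTm Ty Par Emp Sig Par Emp
  | untag : CoTm Ty Par Emp Sig Emp Par

variable {Ty : Type} {Par Emp : Ty} {Sig : Ty → Ty → Type}

/-- The pure terms of `L_excore`. -/
inductive CoPure : ∀ {X Y : Ty}, CoTm Ty Par Emp Sig X Y → Prop where
  | id (X : Ty) : CoPure (CoTm.id X)
  | comp {X Y Z : Ty} {g : CoTm Ty Par Emp Sig Y Z} {f : CoTm Ty Par Emp Sig X Y} :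
      CoPure g → CoPure f → CoPure (CoTm.comp g f)
  | gen {X Y : Ty} (s : Sig X Y) : CoPure (CoTm.gen (Par := Par) (Emp := Emp) s)
  | fromEmpty (Y : Ty) : CoPure (CoTm.fromEmpty (Par := Par) (Sig := Sig) Y)

/-- The propagators of `L_excore`: terms not containing `untag`
(all terms are catchers). -/
inductive CoPpg : ∀ {X Y : Ty}, CoTm Ty Par Emp Sig X Y → Prop where
  | id (X : Ty) : CoPpg (CoTm.id X)
  | comp {X Y Z : Ty} {g : CoTm Ty Par Emp Sig Y Z} {f : CoTm Ty Par Emp Sig X Y} :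
      CoPpg g → CoPpg f → CoPpg (CoTm.comp g f)
  | gen {X Y : Ty} (s : Sig X Y) : CoPpg (CoTm.gen (Par := Par) (Emp := Emp) s)
  | fromEmpty (Y : Ty) : CoPpg (CoTm.fromEmpty (Par := Par) (Sig := Sig) Y)
  | tag : CoPpg (CoTm.tag (Sig := Sig))

/-- A decorated equation of `L_excore`: a pair of parallel terms together with a
`Bool` which is `true` for a strong equation `≡` and `false` for a weak equation `∼`. -/
def CoEqn (Ty : Type) (Par Emp : Ty) (Sig : Ty → Ty → Type) : Type :=
  Σ X : Ty, Σ Y : Ty, (CoTm Ty Par Emp Sig X Y × CoTm Ty Par Emp Sig X Y) × Bool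

mutual
/-- Derivable strong equations of `L_excore` from the axiom set `Ax`. -/
inductive CoSEq (Ax : Set (CoEqn Ty Par Emp Sig)) :
    ∀ {X Y : Ty}, CoTm Ty Par Emp Sig X Y → CoTm Ty Par Emp Sig X Y → Prop where
  | ax {X Y : Ty} {f g : CoTm Ty Par Emp Sig X Y} :
      (⟨X, Y, (f, g), true⟩ : CoEqn Ty Par Emp Sig) ∈ Ax → CoSEq Ax f g
  | refl {X Y : Ty} (f : CoTm Ty Par Emp Sig X Y) : CoSEq Ax f f
  | symm {X Y : Ty} {f g : CoTm Ty Par Emp Sig X Y} : CoSEq Ax f g → CoSEq Ax g f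
  | trans {X Y : Ty} {f g h : CoTm Ty Par Emp Sig X Y} :
      CoSEq Ax f g → CoSEq Ax g h → CoSEq Ax f h
  | subs {X Y Z : Ty} (u : CoTm Ty Par Emp Sig X Y) {v₁ v₂ : CoTm Ty Par Emp Sig Y Z} :
      CoSEq Ax v₁ v₂ → CoSEq Ax (v₁.comp u) (v₂.comp u)
  | repl {X Y Z : Ty} {v₁ v₂ : CoTm Ty Par Emp Sig X Y} (w : CoTm Ty Par Emp Sig Y Z) :
      CoSEq Ax v₁ v₂ → CoSEq Ax (w.comp v₁) (w.comp v₂)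
  | idLeft {X Y : Ty} (f : CoTm Ty Par Emp Sig X Y) : CoSEq Ax ((CoTm.id Y).comp f) f
  | idRight {X Y : Ty} (f : CoTm Ty Par Emp Sig X Y) : CoSEq Ax (f.comp (CoTm.id X)) f
  | assoc {W X Y Z : Ty} (h : CoTm Ty Par Emp Sig Y Z) (g : CoTm Ty Par Emp Sig X Y)
      (f : CoTm Ty Par Emp Sig W X) : CoSEq Ax ((h.comp g).comp f) (h.comp (g.comp f))
  -- (initial) of the pure sublogic `L_eqn`:
  | initialPure {Y : Ty} {u : CoTm Ty Par Emp Sig Emp Y} :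
      CoPure u → CoSEq Ax u (CoTm.fromEmpty Y)
  -- (eq₁): a weak equation between propagators is strong
  | eq₁ {X Y : Ty} {f g : CoTm Ty Par Emp Sig X Y} :
      CoPpg f → CoPpg g → CoWEq Ax f g → CoSEq Ax f g
  -- (eq₂)
  | eq₂ {X Y : Ty} {f g : CoTm Ty Par Emp Sig X Y} :
      CoWEq Ax f g → CoSEq Ax (f.comp (CoTm.fromEmpty X)) (g.comp (CoTm.fromEmpty X)) →
      CoSEq Ax f g
  -- (eq₃)
  | eq₃ {X : Ty} {f g : CoTm Ty Par Emp Sig Emp X} :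
      CoWEq Ax (f.comp CoTm.tag) (g.comp CoTm.tag) → CoSEq Ax f g

/-- Derivable weak equations of `L_excore` from the axiom set `Ax`. -/
inductive CoWEq (Ax : Set (CoEqn Ty Par Emp Sig)) :
    ∀ {X Y : Ty}, CoTm Ty Par Emp Sig X Y → CoTm Ty Par Emp Sig X Y → Prop where
  | ax {X Y : Ty} {f g : CoTm Ty Par Emp Sig X Y} :
      (⟨X, Y, (f, g), false⟩ : CoEqn Ty Par Emp Sig) ∈ Ax → CoWEq Ax f g
  | symm {X Y : Ty} {f g : CoTm Ty Par Emp Sig X Y} : CoWEq Ax f g → CoWEq Ax g f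
  | trans {X Y : Ty} {f g h : CoTm Ty Par Emp Sig X Y} :
      CoWEq Ax f g → CoWEq Ax g h → CoWEq Ax f h
  -- (subs_∼): substitution only by pure terms
  | subsPure {X Y Z : Ty} {u : CoTm Ty Par Emp Sig X Y} {v₁ v₂ : CoTm Ty Par Emp Sig Y Z} :
      CoPure u → CoWEq Ax v₁ v₂ → CoWEq Ax (v₁.comp u) (v₂.comp u)
  -- (repl_∼): replacement by arbitrary terms
  | repl {X Y Z : Ty} {v₁ v₂ : CoTm Ty Par Emp Sig X Y} (w : CoTm Ty Par Emp Sig Y Z) :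
      CoWEq Ax v₁ v₂ → CoWEq Ax (w.comp v₁) (w.comp v₂)
  -- (empty_∼)
  | empty {Y : Ty} (f : CoTm Ty Par Emp Sig Emp Y) : CoWEq Ax f (CoTm.fromEmpty Y)
  -- (≡-to-∼)
  | ofStrong {X Y : Ty} {f g : CoTm Ty Par Emp Sig X Y} : CoSEq Ax f g → CoWEq Ax f g
  -- (ax): untag ∘ tag ∼ id_P
  | untag_tag : CoWEq Ax ((CoTm.untag (Sig := Sig)).comp CoTm.tag) (CoTm.id Par)
end

/-- Two sets of decorated equations are `T_excore`-equivalent over `Ax` when they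
generate the same theory (same strong and weak theorems) over `Ax`. -/
def CoEquiv (Ax E₁ E₂ : Set (CoEqn Ty Par Emp Sig)) : Prop :=
  ∀ (X Y : Ty) (f g : CoTm Ty Par Emp Sig X Y),
    (CoSEq (Ax ∪ E₁) f g ↔ CoSEq (Ax ∪ E₂) f g) ∧
    (CoWEq (Ax ∪ E₁) f g ↔ CoWEq (Ax ∪ E₂) f g)

/-- `Ax` is a pure (strong) theory: all axioms are strong equations between pure terms. -/
def CoPureAx (Ax : Set (CoEqn Ty Par Emp Sig)) : Prop :=
  ∀ e ∈ Ax, CoPure e.2.2.1.1 ∧ CoPure e.2.2.1.2 ∧ e.2.2.2 = true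


section Aux

variable {Ax : Set (CoEqn Ty Par Emp Sig)}

local infixr:80 " ⊚ " => CoTm.comp
local infix:50 " ≋ " => CoSEq Ax
local infix:50 " ≈w " => CoWEq Ax

instance {X Y : Ty} :
    Trans (CoSEq Ax (X := X) (Y := Y)) (CoSEq Ax (X := X) (Y := Y))
      (CoSEq Ax (X := X) (Y := Y)) := ⟨CoSEq.trans⟩

instance {X Y : Ty} :
    Trans (CoWEq Ax (X := X) (Y := Y)) (CoWEq Ax (X := X) (Y := Y))
      (CoWEq Ax (X := X) (Y := Y)) := ⟨CoWEq.trans⟩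

instance {X Y : Ty} :
    Trans (CoSEq Ax (X := X) (Y := Y)) (CoWEq Ax (X := X) (Y := Y))
      (CoWEq Ax (X := X) (Y := Y)) := ⟨fun h1 h2 => (CoWEq.ofStrong h1).trans h2⟩

instance {X Y : Ty} :
    Trans (CoWEq Ax (X := X) (Y := Y)) (CoSEq Ax (X := X) (Y := Y))
      (CoWEq Ax (X := X) (Y := Y)) := ⟨fun h1 h2 => h1.trans (CoWEq.ofStrong h2)⟩

/-- Every pure term is a propagator. -/
lemma CoPure.ppg {X Y : Ty} {f : CoTm Ty Par Emp Sig X Y} (h : CoPure f) : CoPpg f := by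
  induction h with
  | id X => exact .id X
  | comp _ _ ih1 ih2 => exact .comp ih1 ih2
  | gen s => exact .gen s
  | fromEmpty Y => exact .fromEmpty Y

/-- Congruence of strong equality for composition. -/
lemma scomp {X Y Z : Ty} {g₁ g₂ : CoTm Ty Par Emp Sig Y Z} {f₁ f₂ : CoTm Ty Par Emp Sig X Y}
    (hg : CoSEq Ax g₁ g₂) (hf : CoSEq Ax f₁ f₂) : (g₁ ⊚ f₁) ≋ (g₂ ⊚ f₂) :=
  (CoSEq.subs f₁ hg).trans (CoSEq.repl g₂ hf)

/-- For pure `v : 0 → P`, `tag ∘ v ≡ id_0`. -/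
lemma tag_pure_emp {v : CoTm Ty Par Emp Sig Emp Par} (hv : CoPure v) :
    (CoTm.tag ⊚ v) ≋ CoTm.id Emp :=
  CoSEq.eq₁ (.comp .tag hv.ppg) (.id Emp)
    ((CoWEq.empty _).trans (CoWEq.symm (CoWEq.empty _)))

/-- Canonical form for propagators: a propagator is strongly equal to a pure term,
or to `fromEmpty ∘ tag ∘ u` for a pure `u`. -/
lemma ppg_canon {X Y : Ty} {f : CoTm Ty Par Emp Sig X Y} (h : CoPpg f) :
    (∃ p : CoTm Ty Par Emp Sig X Y, CoPure p ∧ f ≋ p) ∨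
    (∃ u : CoTm Ty Par Emp Sig X Par, CoPure u ∧
      f ≋ (CoTm.fromEmpty Y ⊚ (CoTm.tag ⊚ u))) := by
  induction h with
  | id X => exact .inl ⟨_, .id X, .refl _⟩
  | gen s => exact .inl ⟨_, .gen s, .refl _⟩
  | fromEmpty Y => exact .inl ⟨_, .fromEmpty Y, .refl _⟩
  | tag =>
      refine .inr ⟨CoTm.id Par, .id Par, CoSEq.symm ?_⟩
      calc (CoTm.fromEmpty (Par := Par) (Sig := Sig) Emp) ⊚ (CoTm.tag ⊚ CoTm.id Par)
          ≋ CoTm.id Emp ⊚ (CoTm.tag ⊚ CoTm.id Par) :=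
            scomp (CoSEq.symm (CoSEq.initialPure (.id Emp))) (.refl _)
        _ ≋ CoTm.tag ⊚ CoTm.id Par := CoSEq.idLeft _
        _ ≋ CoTm.tag := CoSEq.idRight _
  | @comp X Y Z g f hg hf ihg ihf =>
      rcases ihf with ⟨p, hp, hfp⟩ | ⟨u, hu, hfu⟩
      · rcases ihg with ⟨q, hq, hgq⟩ | ⟨v, hv, hgv⟩
        · exact .inl ⟨q ⊚ p, .comp hq hp, scomp hgq hfp⟩
        · refine .inr ⟨v ⊚ p, .comp hv hp, ?_⟩
          calc g ⊚ f ≋ (CoTm.fromEmpty Z ⊚ (CoTm.tag ⊚ v)) ⊚ p := scomp hgv hfp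
            _ ≋ CoTm.fromEmpty Z ⊚ ((CoTm.tag ⊚ v) ⊚ p) := CoSEq.assoc _ _ _
            _ ≋ CoTm.fromEmpty Z ⊚ (CoTm.tag ⊚ (v ⊚ p)) := CoSEq.repl _ (CoSEq.assoc _ _ _)
      · have hge : (g ⊚ CoTm.fromEmpty Y) ≋ CoTm.fromEmpty Z := by
          rcases ihg with ⟨q, hq, hgq⟩ | ⟨v, hv, hgv⟩
          · calc g ⊚ CoTm.fromEmpty Y ≋ q ⊚ CoTm.fromEmpty Y := scomp hgq (.refl _)
              _ ≋ CoTm.fromEmpty Z := CoSEq.initialPure (.comp hq (.fromEmpty Y))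
          · calc g ⊚ CoTm.fromEmpty Y
                ≋ (CoTm.fromEmpty Z ⊚ (CoTm.tag ⊚ v)) ⊚ CoTm.fromEmpty Y :=
                  scomp hgv (.refl _)
              _ ≋ CoTm.fromEmpty Z ⊚ ((CoTm.tag ⊚ v) ⊚ CoTm.fromEmpty Y) := CoSEq.assoc _ _ _
              _ ≋ CoTm.fromEmpty Z ⊚ (CoTm.tag ⊚ (v ⊚ CoTm.fromEmpty Y)) :=
                  CoSEq.repl _ (CoSEq.assoc _ _ _)
              _ ≋ CoTm.fromEmpty Z ⊚ CoTm.id Emp :=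
                  CoSEq.repl _ (tag_pure_emp (.comp hv (.fromEmpty Y)))
              _ ≋ CoTm.fromEmpty Z := CoSEq.idRight _
        refine .inr ⟨u, hu, ?_⟩
        calc g ⊚ f ≋ g ⊚ (CoTm.fromEmpty Y ⊚ (CoTm.tag ⊚ u)) := CoSEq.repl _ hfu
          _ ≋ (g ⊚ CoTm.fromEmpty Y) ⊚ (CoTm.tag ⊚ u) := (CoSEq.assoc _ _ _).symm
          _ ≋ CoTm.fromEmpty Z ⊚ (CoTm.tag ⊚ u) := scomp hge (.refl _)

/-- Composing with `tag` on the left turns any propagator into a pure term. -/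
lemma tag_ppg {W : Ty} {f : CoTm Ty Par Emp Sig W Par} (h : CoPpg f) :
    ∃ p : CoTm Ty Par Emp Sig W Par, CoPure p ∧ (CoTm.tag ⊚ f) ≋ (CoTm.tag ⊚ p) := by
  rcases ppg_canon h with ⟨p, hp, hfp⟩ | ⟨q, hq, hfq⟩
  · exact ⟨p, hp, CoSEq.repl _ hfp⟩
  · refine ⟨q, hq, ?_⟩
    calc CoTm.tag ⊚ f ≋ CoTm.tag ⊚ (CoTm.fromEmpty Par ⊚ (CoTm.tag ⊚ q)) :=
          CoSEq.repl _ hfq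
      _ ≋ (CoTm.tag ⊚ CoTm.fromEmpty Par) ⊚ (CoTm.tag ⊚ q) := (CoSEq.assoc _ _ _).symm
      _ ≋ CoTm.id Emp ⊚ (CoTm.tag ⊚ q) := scomp (tag_pure_emp (.fromEmpty Par)) (.refl _)
      _ ≋ CoTm.tag ⊚ q := CoSEq.idLeft _

/-- Key collapsing lemma: `(untag ∘ tag ∘ p) ∘ untag ≡ p ∘ untag` for pure `p`. -/
lemma keyC {p : CoTm Ty Par Emp Sig Par Par} (hp : CoPure p) :
    ((CoTm.untag ⊚ (CoTm.tag ⊚ p)) ⊚ CoTm.untag) ≋ (p ⊚ CoTm.untag) := by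
  apply CoSEq.eq₃
  have h1 : (((CoTm.untag ⊚ (CoTm.tag ⊚ p)) ⊚ CoTm.untag) ⊚ CoTm.tag) ≈w p := by
    calc ((CoTm.untag ⊚ (CoTm.tag ⊚ p)) ⊚ CoTm.untag) ⊚ CoTm.tag
        ≈w (CoTm.untag ⊚ (CoTm.tag ⊚ p)) ⊚ (CoTm.untag ⊚ CoTm.tag) :=
          CoWEq.ofStrong (CoSEq.assoc _ _ _)
      _ ≈w (CoTm.untag ⊚ (CoTm.tag ⊚ p)) ⊚ CoTm.id Par := CoWEq.repl _ CoWEq.untag_tag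
      _ ≈w CoTm.untag ⊚ (CoTm.tag ⊚ p) := CoWEq.ofStrong (CoSEq.idRight _)
      _ ≈w (CoTm.untag ⊚ CoTm.tag) ⊚ p := CoWEq.ofStrong (CoSEq.assoc _ _ _).symm
      _ ≈w CoTm.id Par ⊚ p := CoWEq.subsPure hp CoWEq.untag_tag
      _ ≈w p := CoWEq.ofStrong (CoSEq.idLeft _)
  have h2 : ((p ⊚ CoTm.untag) ⊚ CoTm.tag) ≈w p := by
    calc (p ⊚ CoTm.untag) ⊚ CoTm.tag
        ≈w p ⊚ (CoTm.untag ⊚ CoTm.tag) := CoWEq.ofStrong (CoSEq.assoc _ _ _)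
      _ ≈w p ⊚ CoTm.id Par := CoWEq.repl _ CoWEq.untag_tag
      _ ≈w p := CoWEq.ofStrong (CoSEq.idRight _)
  exact h1.trans h2.symm

/-- `untag ≡ untag ∘ tag ∘ fromEmpty`. -/
lemma untag_canon :
    (CoTm.untag (Sig := Sig)) ≋ (CoTm.untag ⊚ (CoTm.tag ⊚ CoTm.fromEmpty Par)) := by
  apply CoSEq.eq₃
  have h : ((CoTm.untag ⊚ (CoTm.tag ⊚ CoTm.fromEmpty Par)) ⊚ CoTm.tag)
      ≋ (CoTm.untag ⊚ CoTm.tag) := by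
    calc (CoTm.untag ⊚ (CoTm.tag ⊚ CoTm.fromEmpty Par)) ⊚ CoTm.tag
        ≋ CoTm.untag ⊚ ((CoTm.tag ⊚ CoTm.fromEmpty Par) ⊚ CoTm.tag) := CoSEq.assoc _ _ _
      _ ≋ CoTm.untag ⊚ (CoTm.id Emp ⊚ CoTm.tag) :=
          CoSEq.repl _ (scomp (tag_pure_emp (.fromEmpty Par)) (.refl _))
      _ ≋ CoTm.untag ⊚ CoTm.tag := CoSEq.repl _ (CoSEq.idLeft _)
  exact CoWEq.ofStrong h.symm

/-- Main induction for Statement 13. -/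
lemma canon_catcher_aux {X Y : Ty} (f : CoTm Ty Par Emp Sig X Y) :
    (∃ a : CoTm Ty Par Emp Sig X Y, CoPpg a ∧ CoSEq Ax f a) ∨
    (∃ a : CoTm Ty Par Emp Sig Par Y, CoPpg a ∧
      ∃ u : CoTm Ty Par Emp Sig X Par, CoPure u ∧
        CoSEq Ax f (a.comp (CoTm.untag.comp (CoTm.tag.comp u)))) := by
  induction f with
  | id X => exact .inl ⟨_, .id X, .refl _⟩
  | gen s => exact .inl ⟨_, .gen s, .refl _⟩
  | fromEmpty Y => exact .inl ⟨_, .fromEmpty Y, .refl _⟩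
  | tag => exact .inl ⟨_, .tag, .refl _⟩
  | untag =>
      refine .inr ⟨CoTm.id Par, .id Par, CoTm.fromEmpty Par, .fromEmpty Par, ?_⟩
      exact untag_canon.trans (CoSEq.idLeft _).symm
  | comp g f ihg ihf =>
      rcases ihf with ⟨af, haf, hf⟩ | ⟨bf, hbf, uf, huf, hf⟩
      · rcases ihg with ⟨ag, hag, hg⟩ | ⟨bg, hbg, ug, hug, hg⟩
        · exact .inl ⟨ag.comp af, .comp hag haf, scomp hg hf⟩
        · obtain ⟨p, hp, htp⟩ := tag_ppg (Ax := Ax) (CoPpg.comp hug.ppg haf)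
          refine .inr ⟨bg, hbg, p, hp, ?_⟩
          calc g.comp f
                  ≋ (bg.comp (CoTm.untag.comp (CoTm.tag.comp ug))).comp af := scomp hg hf
            _ ≋ bg.comp ((CoTm.untag.comp (CoTm.tag.comp ug)).comp af) := CoSEq.assoc _ _ _
            _ ≋ bg.comp (CoTm.untag.comp ((CoTm.tag.comp ug).comp af)) :=
                CoSEq.repl _ (CoSEq.assoc _ _ _)
            _ ≋ bg.comp (CoTm.untag.comp (CoTm.tag.comp (ug.comp af))) :=
                CoSEq.repl _ (CoSEq.repl _ (CoSEq.assoc _ _ _))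
            _ ≋ bg.comp (CoTm.untag.comp (CoTm.tag.comp p)) :=
                CoSEq.repl _ (CoSEq.repl _ htp)
      · rcases ihg with ⟨ag, hag, hg⟩ | ⟨bg, hbg, ug, hug, hg⟩
        · refine .inr ⟨ag.comp bf, .comp hag hbf, uf, huf, ?_⟩
          exact (scomp hg hf).trans (CoSEq.assoc _ _ _).symm
        · obtain ⟨p, hp, htp⟩ := tag_ppg (Ax := Ax) (CoPpg.comp hug.ppg hbf)
          refine .inr ⟨bg.comp p, .comp hbg hp.ppg, uf, huf, ?_⟩
          set M := CoTm.untag.comp (CoTm.tag.comp uf) with hM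
          calc g.comp f
                  ≋ (bg.comp (CoTm.untag.comp (CoTm.tag.comp ug))).comp (bf.comp M) :=
                scomp hg hf
            _ ≋ bg.comp ((CoTm.untag.comp (CoTm.tag.comp ug)).comp (bf.comp M)) :=
                CoSEq.assoc _ _ _
            _ ≋ bg.comp (CoTm.untag.comp ((CoTm.tag.comp ug).comp (bf.comp M))) :=
                CoSEq.repl _ (CoSEq.assoc _ _ _)
            _ ≋ bg.comp (CoTm.untag.comp (CoTm.tag.comp (ug.comp (bf.comp M)))) :=
                CoSEq.repl _ (CoSEq.repl _ (CoSEq.assoc _ _ _))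
            _ ≋ bg.comp (CoTm.untag.comp (CoTm.tag.comp ((ug.comp bf).comp M))) :=
                CoSEq.repl _ (CoSEq.repl _ (CoSEq.repl _ (CoSEq.assoc _ _ _).symm))
            _ ≋ bg.comp (CoTm.untag.comp ((CoTm.tag.comp (ug.comp bf)).comp M)) :=
                CoSEq.repl _ (CoSEq.repl _ (CoSEq.assoc _ _ _).symm)
            _ ≋ bg.comp (CoTm.untag.comp ((CoTm.tag.comp p).comp M)) :=
                CoSEq.repl _ (CoSEq.repl _ (scomp htp (.refl _)))
            _ ≋ bg.comp ((CoTm.untag.comp (CoTm.tag.comp p)).comp M) :=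
                CoSEq.repl _ (CoSEq.assoc _ _ _).symm
            _ ≋ bg.comp (((CoTm.untag.comp (CoTm.tag.comp p)).comp CoTm.untag).comp
                (CoTm.tag.comp uf)) :=
                CoSEq.repl _ (CoSEq.assoc _ _ _).symm
            _ ≋ bg.comp ((p.comp CoTm.untag).comp (CoTm.tag.comp uf)) :=
                CoSEq.repl _ (scomp (keyC hp) (.refl _))
            _ ≋ bg.comp (p.comp (CoTm.untag.comp (CoTm.tag.comp uf))) :=
                CoSEq.repl _ (CoSEq.assoc _ _ _)
            _ ≋ (bg.comp p).comp (CoTm.untag.comp (CoTm.tag.comp uf)) :=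
                (CoSEq.assoc _ _ _).symm

end Aux

/-- In `L_excore`, every catcher `f : X → Y` is provably strongly equal
either to a propagator, or to `a ∘ untag ∘ tag ∘ u` for some propagator `a : P → Y`
and pure term `u : X → P`. -/
theorem coexc_canonical_form_catcher (Ax : Set (CoEqn Ty Par Emp Sig)) (hAx : CoPureAx Ax)
    {X Y : Ty} (f : CoTm Ty Par Emp Sig X Y) :
    (∃ a : CoTm Ty Par Emp Sig X Y, CoPpg a ∧ CoSEq Ax f a) ∨
    (∃ a : CoTm Ty Par Emp Sig Par Y, CoPpg a ∧
      ∃ u : CoTm Ty Par Emp Sig X Par, CoPure u ∧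
        CoSEq Ax f (a.comp (CoTm.untag.comp (CoTm.tag.comp u)))) :=
  canon_catcher_aux f
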